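/- With notation as above, every eigenvalue λ of P = D̂^{-1/2}(A+I)D̂^{-1/2} satisfies -1 < λ ≤ 1. (The strict lower bound uses the self-loops: since Â has positive diagonal, -1 is not an eigenvalue.) -/

import Mathlib

/-!
Write `d` for the row sums of `Â` and `w = D̂^{-1/2} v`. Then `⟪v, P v⟫ = ⟪w, Â w⟫` and
`⟪v, v⟫ = ∑ dᵢ wᵢ²`, and by symmetry of `Â`
`∑ᵢⱼ Âᵢⱼ (wᵢ ± wⱼ)² = 2 (∑ dᵢ wᵢ² ± ⟪w, Â w⟫)`.
Since `Â ≥ 0` the left side is nonnegative, giving `⟪v, P v⟫ ≤ ⟪v, v⟫`; with the `+` sign the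
diagonal terms `Âᵢᵢ (2 wᵢ)² > 0` make it positive, giving `-⟪v, v⟫ < ⟪v, P v⟫`. Evaluating at an
eigenvector bounds the eigenvalue.
-/

open Finset

namespace Matrix

variable {ι : Type*} [Fintype ι]

theorem sum_mul_add_smul_sq {A : Matrix ι ι ℝ} (hA : A.IsSymm) (w : ι → ℝ) (t : ℝ) :
    ∑ i, ∑ j, A i j * (w i + t * w j) ^ 2 =
      (1 + t ^ 2) * ∑ i, (∑ j, A i j) * w i ^ 2 + 2 * t * (w ⬝ᵥ A *ᵥ w) := by
  have hswap : ∑ i, ∑ j, A i j * w j ^ 2 = ∑ i, (∑ j, A i j) * w i ^ 2 := by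
    rw [sum_comm]
    simp_rw [sum_mul]
    exact sum_congr rfl fun i _ => sum_congr rfl fun j _ => by rw [hA.apply i j]
  have hquad : w ⬝ᵥ A *ᵥ w = ∑ i, ∑ j, A i j * w i * w j := by
    simp only [dotProduct, mulVec, mul_sum]
    exact sum_congr rfl fun i _ => sum_congr rfl fun j _ => by ring
  have hexpand : ∀ i j, A i j * (w i + t * w j) ^ 2 =
      A i j * w i ^ 2 + t ^ 2 * (A i j * w j ^ 2) + 2 * t * (A i j * w i * w j) :=
    fun i j => by ring
  simp_rw [hexpand, sum_add_distrib, ← mul_sum, hswap, hquad, ← sum_mul]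
  ring

variable {A : Matrix ι ι ℝ}

theorem dotProduct_mulVec_le_sum_rowSum_mul_sq (hA : A.IsSymm) (hA0 : ∀ i j, 0 ≤ A i j)
    (w : ι → ℝ) : w ⬝ᵥ A *ᵥ w ≤ ∑ i, (∑ j, A i j) * w i ^ 2 := by
  have hsq := sum_mul_add_smul_sq hA w (-1)
  have hnonneg : 0 ≤ ∑ i, ∑ j, A i j * (w i + -1 * w j) ^ 2 :=
    sum_nonneg fun i _ => sum_nonneg fun j _ => mul_nonneg (hA0 i j) (sq_nonneg _)
  linarith

theorem neg_sum_rowSum_mul_sq_lt_dotProduct_mulVec (hA : A.IsSymm) (hA0 : ∀ i j, 0 ≤ A i j)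
    (hdiag : ∀ i, 0 < A i i) {w : ι → ℝ} (hw : w ≠ 0) :
    -∑ i, (∑ j, A i j) * w i ^ 2 < w ⬝ᵥ A *ᵥ w := by
  have hsq := sum_mul_add_smul_sq hA w 1
  obtain ⟨k, hk⟩ := Function.ne_iff.mp hw
  have hterm : ∀ i j, 0 ≤ A i j * (w i + 1 * w j) ^ 2 :=
    fun i j => mul_nonneg (hA0 i j) (sq_nonneg _)
  have hpos : 0 < ∑ i, ∑ j, A i j * (w i + 1 * w j) ^ 2 := by
    refine sum_pos' (fun i _ => sum_nonneg fun j _ => hterm i j) ⟨k, mem_univ k, ?_⟩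
    calc 0 < A k k * (w k + 1 * w k) ^ 2 :=
          mul_pos (hdiag k)
            (sq_pos_of_ne_zero (by contrapose! hk; simp only [Pi.zero_apply]; linarith))
      _ ≤ ∑ j, A k j * (w k + 1 * w j) ^ 2 :=
          single_le_sum (f := fun j => A k j * (w k + 1 * w j) ^ 2) (fun j _ => hterm k j)
            (mem_univ k)
  linarith

variable [DecidableEq ι]

theorem dotProduct_diagonal_mul_mul_diagonal_mulVec (A : Matrix ι ι ℝ) (c v : ι → ℝ) :
    v ⬝ᵥ (diagonal c * A * diagonal c) *ᵥ v = (c * v) ⬝ᵥ A *ᵥ (c * v) := by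
  have hmulVec : diagonal c *ᵥ v = c * v := funext (mulVec_diagonal c v)
  have hvecMul : v ᵥ* diagonal c = c * v :=
    funext fun i => (vecMul_diagonal v c i).trans (mul_comm _ _)
  rw [← mulVec_mulVec, ← mulVec_mulVec, dotProduct_mulVec, hmulVec, hvecMul]

theorem mem_Ioc_of_mem_spectrum {M : Matrix ι ι ℝ} {a b : ℝ}
    (hM : ∀ v ≠ 0, a * (v ⬝ᵥ v) < v ⬝ᵥ M *ᵥ v ∧ v ⬝ᵥ M *ᵥ v ≤ b * (v ⬝ᵥ v)) {μ : ℝ}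
    (hμ : μ ∈ spectrum ℝ M) : μ ∈ Set.Ioc a b := by
  rw [← spectrum_toLin', ← Module.End.hasEigenvalue_iff_mem_spectrum] at hμ
  obtain ⟨v, hv⟩ := hμ.exists_hasEigenvector
  have hvv : 0 < v ⬝ᵥ v :=
    lt_of_le_of_ne (sum_nonneg fun i _ => mul_self_nonneg (v i))
      (Ne.symm (dotProduct_self_eq_zero.not.mpr hv.2))
  obtain ⟨hlo, hhi⟩ := hM v hv.2
  rw [show M *ᵥ v = μ • v from hv.apply_eq_smul, dotProduct_smul, smul_eq_mul] at hlo hhi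
  exact ⟨lt_of_mul_lt_mul_right hlo hvv.le, le_of_mul_le_mul_right hhi hvv⟩

noncomputable def symmNormalize (A : Matrix ι ι ℝ) : Matrix ι ι ℝ :=
  diagonal (fun i => (√(∑ j, A i j))⁻¹) * A * diagonal (fun i => (√(∑ j, A i j))⁻¹)

theorem symmNormalize_rayleigh_bounds (hA : A.IsSymm) (hA0 : ∀ i j, 0 ≤ A i j)
    (hdiag : ∀ i, 0 < A i i) {v : ι → ℝ} (hv : v ≠ 0) :
    -1 * (v ⬝ᵥ v) < v ⬝ᵥ A.symmNormalize *ᵥ v ∧ v ⬝ᵥ A.symmNormalize *ᵥ v ≤ 1 * (v ⬝ᵥ v) := by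
  set c : ι → ℝ := fun i => (√(∑ j, A i j))⁻¹
  have hrow (i : ι) : 0 < ∑ j, A i j :=
    (hdiag i).trans_le (single_le_sum (fun j _ => hA0 i j) (mem_univ i))
  have hvv : v ⬝ᵥ v = ∑ i, (∑ j, A i j) * (c * v) i ^ 2 := by
    refine sum_congr rfl fun i _ => ?_
    rw [Pi.mul_apply, mul_pow, inv_pow, Real.sq_sqrt (hrow i).le, ← mul_assoc,
      mul_inv_cancel₀ (hrow i).ne', one_mul, sq]
  have hcv : c * v ≠ 0 := by
    obtain ⟨k, hk⟩ := Function.ne_iff.mp hv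
    exact Function.ne_iff.mpr ⟨k, mul_ne_zero (inv_ne_zero (Real.sqrt_pos.mpr (hrow k)).ne') hk⟩
  rw [symmNormalize, dotProduct_diagonal_mul_mul_diagonal_mulVec, hvv, neg_one_mul, one_mul]
  exact ⟨neg_sum_rowSum_mul_sq_lt_dotProduct_mulVec hA hA0 hdiag hcv,
    dotProduct_mulVec_le_sum_rowSum_mul_sq hA hA0 _⟩

end Matrix

theorem stmt4 {n : ℕ} (G : SimpleGraph (Fin n)) [DecidableRel G.Adj] :
    let Ahat : Matrix (Fin n) (Fin n) ℝ := G.adjMatrix ℝ + 1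
    let d : Fin n → ℝ := fun i => ∑ j, Ahat i j
    let P : Matrix (Fin n) (Fin n) ℝ :=
      Matrix.diagonal (fun i => (Real.sqrt (d i))⁻¹) * Ahat *
        Matrix.diagonal (fun i => (Real.sqrt (d i))⁻¹)
    ∀ μ ∈ spectrum ℝ P, -1 < μ ∧ μ ≤ 1 := by
  intro Ahat d P μ hμ
  have hsymm : Ahat.IsSymm := G.isSymm_adjMatrix.add Matrix.isSymm_one
  have hnonneg (i j : Fin n) : 0 ≤ Ahat i j := by
    simp only [Ahat, Matrix.add_apply, SimpleGraph.adjMatrix_apply, Matrix.one_apply]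
    positivity
  have hdiag (i : Fin n) : 0 < Ahat i i := by simp [Ahat]
  exact Matrix.mem_Ioc_of_mem_spectrum
    (fun v hv => Matrix.symmNormalize_rayleigh_bounds hsymm hnonneg hdiag hv) hμ
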